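/- arXiv:1303.1293 — 3 statements merged into one kernel-verified Lean document; each statement's English description precedes it below -/
import Mathlib

section
/- Let a: ℤ → ℂ be a sequence with a(k) ≠ 0 for all k and with nonzero limits a(+∞) = lim_{k→+∞} a(k) and a(−∞) = lim_{k→−∞} a(k). If λ ∈ ℂ satisfies |λ| > max{|a(+∞)|, |a(−∞)|}, then the operator aW − λI on l²(ℤ), where (aW u)(k) = a(k)u(k+1), is invertible. -/
/-!
Fix `ρ` with `max ‖a(+∞)‖ ‖a(-∞)‖ < ρ < ‖λ‖`; then `‖a k‖ ≤ ρ` off a finite set `S` of indices.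
Conjugating `aW` by the diagonal operator of a weight `d` gives the weighted shift with weights
`d(k)⁻¹ a(k) d(k+1)`. Taking `d k = ∏_{i ∈ S, i < k} ρ / max ρ ‖a i‖`, the weight `d` and its
inverse are bounded and the new weights have norm at most `ρ`, so the conjugated operator has
norm `≤ ρ < ‖λ‖`. The spectrum is invariant under conjugation, hence `λ` is not in it.
-/

open Filter Topology
open scoped ENNReal lp

theorem Finset.prod_ite_lt_add_one {M : Type*} [CommMonoid M] (S : Finset ℤ) {c : ℤ → M}
    (hc : ∀ k ∉ S, c k = 1) (k : ℤ) :
    ∏ i ∈ S, (if i < k + 1 then c i else 1) = (∏ i ∈ S, if i < k then c i else 1) * c k := by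
  have hsplit (i : ℤ) : (if i < k + 1 then c i else 1)
      = (if i < k then c i else 1) * (if k = i then c i else 1) := by
    split_ifs <;> first | omega | simp
  rw [prod_congr rfl fun i _ => hsplit i, prod_mul_distrib, prod_ite_eq]
  split_ifs with hk
  · rfl
  · rw [hc k hk]

theorem exists_weight_mul_succ_le {w : ℤ → ℝ} {ρ : ℝ} (hρ : 0 < ρ)
    (hw : ∀ᶠ k in cofinite, w k ≤ ρ) :
    ∃ d : ℤ → ℝ, ∃ δ > 0, (∀ k, δ ≤ d k ∧ d k ≤ 1) ∧ ∀ k, w k * d (k + 1) ≤ ρ * d k := by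
  obtain ⟨S, hS⟩ : ∃ S : Finset ℤ, ∀ k ∉ S, w k ≤ ρ :=
    ⟨(eventually_cofinite.1 hw).toFinset, fun k hk => by simpa using hk⟩
  set c : ℤ → ℝ := fun k => ρ / max ρ (w k)
  have hmax (k : ℤ) : 0 < max ρ (w k) := hρ.trans_le (le_max_left _ _)
  have hc_pos (k : ℤ) : 0 < c k := div_pos hρ (hmax k)
  have hc_le_one (k : ℤ) : c k ≤ 1 := (div_le_one (hmax k)).2 (le_max_left _ _)
  have hc_one (k : ℤ) (hk : k ∉ S) : c k = 1 := by simp [c, max_eq_left (hS k hk), hρ.ne']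
  have hwc (k : ℤ) : w k * c k ≤ ρ := by
    rw [mul_div_assoc', div_le_iff₀ (hmax k), mul_comm]
    exact mul_le_mul_of_nonneg_left (le_max_right _ _) hρ.le
  refine ⟨fun k => ∏ i ∈ S, if i < k then c i else 1, ∏ i ∈ S, c i,
    Finset.prod_pos fun i _ => hc_pos i, fun k => ⟨?_, ?_⟩, fun k => ?_⟩
  · refine Finset.prod_le_prod (fun i _ => (hc_pos i).le) fun i _ => ?_
    split_ifs
    exacts [le_rfl, hc_le_one i]
  · refine Finset.prod_le_one (fun i _ => ?_) fun i _ => ?_ <;> split_ifs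
    exacts [(hc_pos i).le, zero_le_one, hc_le_one i, le_rfl]
  · have hd_nonneg : 0 ≤ ∏ i ∈ S, if i < k then c i else 1 :=
      Finset.prod_nonneg fun i _ => by split_ifs <;> simp [(hc_pos i).le]
    simp only [Finset.prod_ite_lt_add_one S hc_one k]
    calc w k * ((∏ i ∈ S, if i < k then c i else 1) * c k)
        = (w k * c k) * ∏ i ∈ S, if i < k then c i else 1 := by ring
      _ ≤ ρ * ∏ i ∈ S, if i < k then c i else 1 := mul_le_mul_of_nonneg_right (hwc k) hd_nonneg

theorem ContinuousLinearMap.notMem_spectrum_of_norm_lt {𝕜 E : Type*}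
    [NontriviallyNormedField 𝕜] [NormedAddCommGroup E] [NormedSpace 𝕜 E] [CompleteSpace E]
    {T : E →L[𝕜] E} {k : 𝕜} (h : ‖T‖ < ‖k‖) : k ∉ spectrum 𝕜 T := fun hk =>
  (spectrum.norm_le_norm_mul_of_mem hk).not_gt <|
    (mul_le_of_le_one_right (norm_nonneg T) norm_id_le).trans_lt h

namespace lp

variable {ι 𝕜 : Type*}

theorem norm_le_mul_of_le_comp_equiv {E : Type*} [NormedAddCommGroup E] {p : ℝ≥0∞}
    (hp : 0 < p.toReal) (σ : ι ≃ ι) {C : ℝ} (hC : 0 ≤ C) {x y : ℓ^p(ι, E)}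
    (h : ∀ i, ‖x i‖ ≤ C * ‖y (σ i)‖) : ‖x‖ ≤ C * ‖y‖ := by
  have hy : Summable fun i => ‖y (σ i)‖ ^ p.toReal :=
    (σ.summable_iff (f := fun i => ‖y i‖ ^ p.toReal)).2 ((lp.memℓp y).summable hp)
  refine norm_le_of_tsum_le hp (mul_nonneg hC (norm_nonneg' y)) ?_
  calc ∑' i, ‖x i‖ ^ p.toReal ≤ ∑' i, C ^ p.toReal * ‖y (σ i)‖ ^ p.toReal := by
        refine ((lp.memℓp x).summable hp).tsum_le_tsum (fun i => ?_) (hy.mul_left _)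
        rw [← Real.mul_rpow hC (norm_nonneg _)]
        exact Real.rpow_le_rpow (norm_nonneg _) (h i) hp.le
    _ = (C * ‖y‖) ^ p.toReal := by
        rw [tsum_mul_left, σ.tsum_eq (fun i => ‖y i‖ ^ p.toReal), ← norm_rpow_eq_tsum hp,
          Real.mul_rpow hC (norm_nonneg' y)]

theorem opNorm_le_of_apply_eq_mul_comp [NontriviallyNormedField 𝕜] {p : ℝ≥0∞} [Fact (1 ≤ p)]
    (hp : 0 < p.toReal) (σ : ι ≃ ι) {w : ι → 𝕜} {C : ℝ} (hC : 0 ≤ C) (hw : ∀ i, ‖w i‖ ≤ C)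
    {T : ℓ^p(ι, 𝕜) →L[𝕜] ℓ^p(ι, 𝕜)} (hT : ∀ x i, T x i = w i * x (σ i)) : ‖T‖ ≤ C :=
  T.opNorm_le_bound hC fun x => norm_le_mul_of_le_comp_equiv hp σ hC fun i => by
    rw [hT, norm_mul]
    exact mul_le_mul_of_nonneg_right (hw i) (norm_nonneg _)

theorem isUnit_infty_of_le_norm [NormedField 𝕜] {f : ℓ^∞(ι, 𝕜)} {δ : ℝ} (hδ : 0 < δ)
    (hf : ∀ i, δ ≤ ‖f i‖) : IsUnit f := by
  have hf0 (i : ι) : f i ≠ 0 := norm_pos_iff.1 (hδ.trans_le (hf i))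
  let g : ℓ^∞(ι, 𝕜) := ⟨fun i => (f i)⁻¹, memℓp_infty ⟨δ⁻¹, by
    rintro _ ⟨i, rfl⟩
    simpa using inv_anti₀ hδ (hf i)⟩⟩
  exact IsUnit.of_mul_eq_one g (ext <| funext fun i => mul_inv_cancel₀ (hf0 i))

theorem infty_units_inv_apply [NormedField 𝕜] (u : (ℓ^∞(ι, 𝕜))ˣ) (i : ι) :
    (↑u⁻¹ : ℓ^∞(ι, 𝕜)) i = ((u : ℓ^∞(ι, 𝕜)) i)⁻¹ := by
  refine eq_inv_of_mul_eq_one_left ?_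
  rw [← Pi.mul_apply, ← infty_coeFn_mul, u.inv_mul, infty_coeFn_one, Pi.one_apply]

variable [NontriviallyNormedField 𝕜] (p : ℝ≥0∞) [Fact (1 ≤ p)]

noncomputable def diagonalCLM : ℓ^∞(ι, 𝕜) →* (ℓ^p(ι, 𝕜) →L[𝕜] ℓ^p(ι, 𝕜)) where
  toFun m := mapCLM p (fun i => ContinuousLinearMap.mul 𝕜 𝕜 (m i)) (norm_nonneg m)
    fun i => (ContinuousLinearMap.opNorm_mul_apply_le 𝕜 𝕜 (m i)).trans
      (norm_apply_le_norm ENNReal.top_ne_zero m i)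
  map_one' := by ext; simp
  map_mul' m n := by ext; simp [mul_assoc]

@[simp]
theorem diagonalCLM_apply (m : ℓ^∞(ι, 𝕜)) (x : ℓ^p(ι, 𝕜)) (i : ι) :
    diagonalCLM p m x i = m i * x i := rfl

end lp

theorem stmt6_general (a : ℤ → ℂ)
    (aP aM : ℂ)
    (hlimP : Tendsto a atTop (𝓝 aP)) (hlimM : Tendsto a atBot (𝓝 aM))
    (B : lp (fun _ : ℤ => ℂ) 2 →L[ℂ] lp (fun _ : ℤ => ℂ) 2)
    (hB : ∀ (u : lp (fun _ : ℤ => ℂ) 2) (k : ℤ), B u k = a k * u (k + 1))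
    (lam : ℂ) (hlam : max ‖aP‖ ‖aM‖ < ‖lam‖) :
    lam ∉ spectrum ℂ B := by
  obtain ⟨ρ, hρ, hρlam⟩ := exists_between hlam
  have hρpos : 0 < ρ := (norm_nonneg aP).trans_lt ((le_max_left _ _).trans_lt hρ)
  have hsmall : ∀ᶠ k in cofinite, ‖a k‖ ≤ ρ := by
    rw [Int.cofinite_eq, eventually_sup]
    exact ⟨hlimM.norm.eventually (ge_mem_nhds ((le_max_right _ _).trans_lt hρ)),
      hlimP.norm.eventually (ge_mem_nhds ((le_max_left _ _).trans_lt hρ))⟩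
  obtain ⟨d, δ, hδ, hd, had⟩ := exists_weight_mul_succ_le hρpos hsmall
  have hnorm_d (k : ℤ) : ‖(d k : ℂ)‖ = d k := Complex.norm_of_nonneg (hδ.le.trans (hd k).1)
  let D : ℓ^∞(ℤ, ℂ) :=
    ⟨fun k => d k, memℓp_infty ⟨1, by rintro _ ⟨k, rfl⟩; exact (hnorm_d k).trans_le (hd k).2⟩⟩
  obtain ⟨u, hu⟩ := lp.isUnit_infty_of_le_norm hδ (f := D) fun k => (hnorm_d k).symm ▸ (hd k).1
  rw [← spectrum.units_conjugate' (u := Units.map (lp.diagonalCLM 2) u)]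
  refine ContinuousLinearMap.notMem_spectrum_of_norm_lt <|
    (lp.opNorm_le_of_apply_eq_mul_comp (by norm_num) (Equiv.addRight 1) hρpos.le
      (w := fun k => (↑u⁻¹ : ℓ^∞(ℤ, ℂ)) k * a k * (u : ℓ^∞(ℤ, ℂ)) (k + 1))
      (fun k => ?_) fun x k => ?_).trans_lt hρlam
  · rw [norm_mul, norm_mul, lp.infty_units_inv_apply, norm_inv, hu]
    show ‖(d k : ℂ)‖⁻¹ * ‖a k‖ * ‖(d (k + 1) : ℂ)‖ ≤ ρ
    rw [hnorm_d, hnorm_d, mul_assoc, inv_mul_le_iff₀ (hδ.trans_le (hd k).1)]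
    exact (had k).trans_eq (mul_comm _ _)
  · simp [hB, mul_assoc]

/-- For a sequence `a : ℤ → ℂ` with `a k ≠ 0` and nonzero limits `a(±∞)`, if
`|λ| > max {|a(+∞)|, |a(−∞)|}` then the operator `aW − λI` on `ℓ²(ℤ)` is invertible,
i.e. `λ` is not in the spectrum of `aW`. -/
theorem stmt6 (a : ℤ → ℂ) (ha : ∀ k, a k ≠ 0)
    (aP aM : ℂ) (haP : aP ≠ 0) (haM : aM ≠ 0)
    (hlimP : Tendsto a atTop (𝓝 aP)) (hlimM : Tendsto a atBot (𝓝 aM))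
    (B : lp (fun _ : ℤ => ℂ) 2 →L[ℂ] lp (fun _ : ℤ => ℂ) 2)
    (hB : ∀ (u : lp (fun _ : ℤ => ℂ) 2) (k : ℤ), B u k = a k * u (k + 1))
    (lam : ℂ) (hlam : max ‖aP‖ ‖aM‖ < ‖lam‖) :
    lam ∉ spectrum ℂ B :=
  stmt6_general a aP aM hlimP hlimM B hB lam hlam
end

section
/- Let α: X₀ → X₀ be a bijection and W ⊆ X₀ with α(W) ⊆ W, and suppose for every x ∈ X₀ there exist integers m with α^m(x) ∈ W and integers m with α^m(x) ∉ W. Then every orbit {α^n(x) : n ∈ ℤ} meets the set Θ = W \ α(W) in exactly one point. -/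
/-!
Because `α(W) ⊆ W`, the times `n` with `α^n x ∈ W` form an up-set of `ℤ`, nonempty and bounded
below by the hypotheses; and `α^n x ∈ α(W)` means `α^(n-1) x ∈ W`, so `α^n x ∈ Θ` exactly when
`n` is the least element of that up-set.
-/

open Set

theorem Int.existsUnique_and_not_sub_one_of_monotone {P : ℤ → Prop} (hP : Monotone P)
    (hpos : ∃ m, P m) (hneg : ∃ m, ¬P m) : ∃! n, P n ∧ ¬P (n - 1) := by
  obtain ⟨m, hm⟩ := hneg
  have hbdd : ∃ b : ℤ, ∀ z, P z → b ≤ z :=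
    ⟨m + 1, fun z hz => by_contra fun h => hm (hP (by omega) hz)⟩
  obtain ⟨n, hn, hleast⟩ := Int.exists_least_of_bdd hbdd hpos
  refine ⟨n, ⟨hn, fun h => by linarith [hleast _ h]⟩, fun k ⟨hk, hk'⟩ => ?_⟩
  have hnk : n ≤ k := hleast k hk
  by_contra hne
  exact hk' (hP (by omega) hn)

theorem Equiv.Perm.zpow_apply_mem_image_iff {X : Type*} (α : Equiv.Perm X) (W : Set X)
    (n : ℤ) (x : X) : (α ^ n) x ∈ ⇑α '' W ↔ (α ^ (n - 1)) x ∈ W := by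
  have h : (α ^ n) x = α ((α ^ (n - 1)) x) := by
    rw [← Equiv.Perm.mul_apply, ← zpow_one_add, add_sub_cancel]
  rw [h, α.injective.mem_set_image]

/-- If `α` is a bijection, `W` satisfies `α(W) ⊆ W`, and every orbit meets both `W`
and its complement, then every orbit meets the fundamental set `Θ = W \ α(W)` in
exactly one point. -/
theorem stmt13 {X : Type*} (α : Equiv.Perm X) (W : Set X) (hWinv : ⇑α '' W ⊆ W)
    (hin : ∀ x : X, ∃ m : ℤ, (α ^ m) x ∈ W)
    (hout : ∀ x : X, ∃ m : ℤ, (α ^ m) x ∉ W) :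
    ∀ x : X, ∃! n : ℤ, (α ^ n) x ∈ W \ ⇑α '' W := by
  intro x
  have hmono : Monotone fun n : ℤ => (α ^ n) x ∈ W :=
    monotone_int_of_le_succ fun n hn =>
      hWinv ((α.zpow_apply_mem_image_iff W _ x).2 (by rwa [add_sub_cancel_right]))
  simpa only [mem_sdiff, α.zpow_apply_mem_image_iff] using
    Int.existsUnique_and_not_sub_one_of_monotone hmono (hin x) (hout x)
end

section
/- Let a: ℤ → ℂ be a bounded sequence with a(k) ≠ 0 for all k and limits a(±∞) at ±∞, and suppose |λ| = |a(+∞)| ≠ 0 with |a(−∞)| < |λ|. Then the range of aW − λI on l²(ℤ) is not closed. -/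
/-!
If the range of `T = aW - λ` were closed it would be `(ker T†)ᗮ`. The adjoint acts by
`(T† v) k = conj (a (k - 1)) * v (k - 1) - conj λ * v k`, so a vector in its kernel solves a
first-order recursion; since `|a| < |λ|` near `-∞` the solution grows geometrically to the left,
which an `ℓ²` vector cannot do unless it vanishes. So `T` would be onto and, by the open mapping
theorem, `T†` bounded below. But near `+∞`, where `|a| ≈ |λ|`, the solution of the recursion cut
off to a window of length `L` has norm about `√L`, while `T†` maps it to a vector of norm about
`2|λ|` supported on the two ends of the window.
-/

open Filter Topology Finset

open scoped lp InnerProduct ComplexConjugate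

namespace ContinuousLinearMap

variable {𝕜 E F : Type*} [RCLike 𝕜] [NormedAddCommGroup E] [InnerProductSpace 𝕜 E]
  [NormedAddCommGroup F] [InnerProductSpace 𝕜 F] [CompleteSpace E] [CompleteSpace F]

theorem surjective_of_isClosed_range_of_ker_adjoint_eq_bot (T : E →L[𝕜] F)
    (hT : IsClosed (Set.range T)) (hker : T†.ker = ⊥) : Function.Surjective T := by
  have hclosed : IsClosed (T.range : Set F) := by rwa [LinearMap.coe_range]
  rw [← coe_coe, ← LinearMap.range_eq_top, ← hclosed.submodule_topologicalClosure_eq,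
    ← Submodule.orthogonal_orthogonal_eq_closure, orthogonal_range, hker,
    Submodule.bot_orthogonal_eq_top]

theorem exists_antilipschitzWith_adjoint_of_surjective (T : E →L[𝕜] F)
    (hT : Function.Surjective T) : ∃ K, AntilipschitzWith K (T†) := by
  obtain ⟨C, hC0, hC⟩ := T.exists_preimage_norm_le hT
  refine ⟨C.toNNReal, antilipschitz_of_bound _ fun v => ?_⟩
  obtain ⟨x, rfl, hx⟩ := hC v
  rw [Real.coe_toNNReal _ hC0.le]
  rcases (norm_nonneg (T x)).eq_or_lt with h0 | hpos
  · rw [← h0]; positivity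
  refine le_of_mul_le_mul_left ?_ hpos
  calc ‖T x‖ * ‖T x‖ = RCLike.re (inner 𝕜 ((T†) (T x)) x) := by
        rw [adjoint_inner_left, inner_self_eq_norm_mul_norm]
    _ ≤ ‖(T†) (T x)‖ * ‖x‖ := (RCLike.re_le_norm _).trans (norm_inner_le_norm _ _)
    _ ≤ ‖(T†) (T x)‖ * (C * ‖T x‖) := by gcongr
    _ = ‖T x‖ * (C * ‖(T†) (T x)‖) := by ring

end ContinuousLinearMap

theorem lp.eq_zero_of_norm_le_mul_norm_sub_one {E : Type*} [NormedAddCommGroup E]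
    {p : ENNReal} (hp : p ≠ 0) (v : lp (fun _ : ℤ => E) p) {q : ℝ} (hq0 : 0 ≤ q) (hq1 : q < 1)
    {K : ℤ} (hv : ∀ m ≤ K, ‖v m‖ ≤ q * ‖v (m - 1)‖) {m : ℤ} (hm : m ≤ K) : v m = 0 := by
  have hpow : ∀ n : ℕ, ∀ m ≤ K, ‖v m‖ ≤ q ^ n * ‖v‖ := by
    intro n
    induction n with
    | zero => exact fun m _ => by simpa using lp.norm_apply_le_norm hp v m
    | succ n ih =>
      intro m hm
      calc ‖v m‖ ≤ q * ‖v (m - 1)‖ := hv m hm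
        _ ≤ q * (q ^ n * ‖v‖) := by gcongr; exact ih _ (by omega)
        _ = q ^ (n + 1) * ‖v‖ := by ring
  have hlim : Tendsto (fun n : ℕ => q ^ n * ‖v‖) atTop (𝓝 0) := by
    simpa using (tendsto_pow_atTop_nhds_zero_of_lt_one hq0 hq1).mul_const ‖v‖
  exact norm_le_zero_iff.mp (ge_of_tendsto' hlim fun n => hpow n m hm)

theorem lp.norm_sum_single_add_sq {E : Type*} [NormedAddCommGroup E] (N : ℤ) (c : ℕ → E)
    (L : ℕ) :
    ‖(∑ n ∈ range L, lp.single 2 (N + n) (c n) : ℓ²(ℤ, E))‖ ^ 2 = ∑ n ∈ range L, ‖c n‖ ^ 2 := by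
  let e : ℕ ↪ ℤ := ⟨fun n => N + n, fun m n h => by simpa using h⟩
  let f : ℤ → E := fun k => c (k - N).toNat
  have hf : ∀ n : ℕ, c n = f (e n) := fun n => by
    show c n = c ((N + n) - N).toNat
    simp
  simp only [hf]
  change ‖(∑ n ∈ range L, lp.single 2 (e n) (f (e n)) : ℓ²(ℤ, E))‖ ^ 2 = _
  rw [← sum_map (range L) e (fun k => lp.single 2 k (f k)),
    ← sum_map (range L) e (fun k => ‖f k‖ ^ 2)]
  exact_mod_cast lp.norm_sum_single (p := 2) (by norm_num) f _

/-- `S = U ∘ M_b - μ`, with `M_b` multiplication by `b` and `U` the bilateral shift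
`(U v) k = v (k - 1)`. -/
def IsWeightedShiftSubSmul (S : ℓ²(ℤ, ℂ) →L[ℂ] ℓ²(ℤ, ℂ)) (b : ℤ → ℂ) (μ : ℂ) : Prop :=
  ∀ v k, S v k = b (k - 1) * v (k - 1) - μ * v k

theorem isWeightedShiftSubSmul_adjoint {a : ℤ → ℂ} (B : ℓ²(ℤ, ℂ) →L[ℂ] ℓ²(ℤ, ℂ))
    (hB : ∀ u k, B u k = a k * u (k + 1)) (lam : ℂ) :
    IsWeightedShiftSubSmul ((B - lam • ContinuousLinearMap.id ℂ ℓ²(ℤ, ℂ))†)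
      (fun k => conj (a k)) (conj lam) := by
  intro v k
  set T := B - lam • ContinuousLinearMap.id ℂ ℓ²(ℤ, ℂ)
  have hT : T (lp.single 2 k 1) = lp.single 2 (k - 1) (a (k - 1)) - lp.single 2 k lam := by
    ext j
    simp only [T, sub_apply, smul_apply, ContinuousLinearMap.id_apply, lp.coeFn_sub,
      lp.coeFn_smul, Pi.sub_apply, Pi.smul_apply, hB, lp.single_apply, Pi.single_apply,
      smul_eq_mul]
    grind
  calc ((T†) v) k = inner ℂ (lp.single 2 k (1 : ℂ)) ((T†) v) := by
        rw [lp.inner_single_left]; simp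
    _ = inner ℂ (T (lp.single 2 k 1)) v := ContinuousLinearMap.adjoint_inner_right _ _ _
    _ = conj (a (k - 1)) * v (k - 1) - conj lam * v k := by
        rw [hT, inner_sub_left, lp.inner_single_left, lp.inner_single_left]
        simp [RCLike.inner_apply, mul_comm]

noncomputable def windowCoeff (b : ℤ → ℂ) (μ : ℂ) (N : ℤ) (n : ℕ) : ℂ :=
  ∏ i ∈ range n, b (N + i) / μ

/-- The solution of `μ * v (k + 1) = b k * v k`, `v N = 1`, cut off to `[N, N + L)`. -/
noncomputable def window (b : ℤ → ℂ) (μ : ℂ) (N : ℤ) (L : ℕ) : ℓ²(ℤ, ℂ) :=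
  ∑ n ∈ range L, lp.single 2 (N + n) (windowCoeff b μ N n)

theorem tendsto_norm_windowCoeff {b : ℤ → ℂ} {μ β : ℂ} (hb : Tendsto b atTop (𝓝 β))
    (hβ : ‖β‖ = ‖μ‖) (hμ : μ ≠ 0) (n : ℕ) :
    Tendsto (fun N => ‖windowCoeff b μ N n‖) atTop (𝓝 1) := by
  have hlim : Tendsto (fun N => windowCoeff b μ N n) atTop (𝓝 (∏ i ∈ range n, β / μ)) :=
    tendsto_finsetProd _ fun i _ =>
      (hb.comp (tendsto_atTop_add_const_right _ (i : ℤ) tendsto_id)).div_const μ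
  simpa [norm_div, hβ, hμ] using hlim.norm

namespace IsWeightedShiftSubSmul

variable {S : ℓ²(ℤ, ℂ) →L[ℂ] ℓ²(ℤ, ℂ)} {b : ℤ → ℂ} {μ : ℂ}

theorem apply_single (hS : IsWeightedShiftSubSmul S b μ) (k : ℤ) (x : ℂ) :
    S (lp.single 2 k x) = lp.single 2 (k + 1) (b k * x) - lp.single 2 k (μ * x) := by
  ext j
  rw [hS, lp.coeFn_sub, Pi.sub_apply]
  simp only [lp.single_apply, Pi.single_apply, sub_eq_iff_eq_add, mul_ite, mul_zero]
  grind

theorem ker_eq_bot (hS : IsWeightedShiftSubSmul S b μ) {β : ℂ} (hb : Tendsto b atBot (𝓝 β))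
    (hβ : ‖β‖ < ‖μ‖) : S.ker = ⊥ := by
  rw [LinearMap.ker_eq_bot']
  intro v hv
  have hrec : ∀ k, μ * v k = b (k - 1) * v (k - 1) := fun k => by
    have h := hS v k
    rw [show S v = 0 from hv, lp.coeFn_zero, Pi.zero_apply] at h
    linear_combination h
  have hμ : 0 < ‖μ‖ := (norm_nonneg β).trans_lt hβ
  obtain ⟨r, hβr, hrμ⟩ := exists_between hβ
  obtain ⟨K, hK⟩ := eventually_atBot.mp (hb.norm.eventually_lt_const hβr)
  have hleft : ∀ m ≤ K + 1, v m = 0 := by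
    refine fun m hm => lp.eq_zero_of_norm_le_mul_norm_sub_one two_ne_zero v
      (div_nonneg ((norm_nonneg β).trans hβr.le) hμ.le) ((div_lt_one hμ).mpr hrμ)
      (fun m hm => ?_) hm
    rw [div_mul_eq_mul_div, le_div_iff₀ hμ, mul_comm, ← norm_mul, hrec, norm_mul]
    gcongr
    exact (hK _ (by omega)).le
  have hright : ∀ m, K + 1 ≤ m → v m = 0 := by
    refine fun m hm => Int.leInduction (hleft _ le_rfl) (fun n _ ih => ?_) m hm
    have h := hrec (n + 1)
    rw [add_sub_cancel_right, ih, mul_zero] at h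
    exact (mul_eq_zero.mp h).resolve_left (norm_pos_iff.mp hμ)
  ext m
  exact (le_total m (K + 1)).elim (hleft m) (hright m)

theorem apply_window (hS : IsWeightedShiftSubSmul S b μ) (hμ : μ ≠ 0) (N : ℤ) (L : ℕ) :
    S (window b μ N L) = lp.single 2 (N + L) (μ * windowCoeff b μ N L) - lp.single 2 N μ := by
  let F : ℕ → ℓ²(ℤ, ℂ) := fun n => lp.single 2 (N + n) (μ * windowCoeff b μ N n)
  have hstep : ∀ n : ℕ, S (lp.single 2 (N + n) (windowCoeff b μ N n)) = F (n + 1) - F n := by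
    intro n
    rw [hS.apply_single]
    simp only [F, windowCoeff, prod_range_succ, Nat.cast_succ, ← add_assoc]
    congr 2
    field_simp
  rw [window, map_sum, sum_congr rfl fun n _ => hstep n, sum_range_sub]
  simp [F, windowCoeff]

theorem not_antilipschitzWith (hS : IsWeightedShiftSubSmul S b μ) (hμ : μ ≠ 0) {β : ℂ}
    (hb : Tendsto b atTop (𝓝 β)) (hβ : ‖β‖ = ‖μ‖) (K : NNReal) : ¬ AntilipschitzWith K S := by
  intro hK
  obtain ⟨L, hL⟩ := exists_nat_gt ((K * (‖μ‖ * 2)) ^ 2)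
  have hbound : ∀ N, ‖window b μ N L‖ ^ 2 ≤ (K * (‖μ‖ * (‖windowCoeff b μ N L‖ + 1))) ^ 2 := by
    intro N
    gcongr
    calc ‖window b μ N L‖ ≤ K * ‖S (window b μ N L)‖ := S.bound_of_antilipschitz hK _
      _ ≤ K * (‖μ‖ * (‖windowCoeff b μ N L‖ + 1)) := by
        gcongr
        rw [hS.apply_window hμ]
        refine (norm_sub_le _ _).trans_eq ?_
        rw [lp.norm_single two_pos, lp.norm_single two_pos, norm_mul]
        ring
  have hleft : Tendsto (fun N => ‖window b μ N L‖ ^ 2) atTop (𝓝 L) := by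
    simp only [window, lp.norm_sum_single_add_sq]
    simpa using tendsto_finsetSum (range L) fun n _ =>
      (tendsto_norm_windowCoeff hb hβ hμ n).pow 2
  have hright : Tendsto (fun N => (K * (‖μ‖ * (‖windowCoeff b μ N L‖ + 1))) ^ 2) atTop
      (𝓝 ((K * (‖μ‖ * 2)) ^ 2)) := by
    convert (((tendsto_norm_windowCoeff hb hβ hμ L).add_const 1).const_mul ‖μ‖ |>.const_mul
      (K : ℝ)).pow 2 using 3
    norm_num
  exact (le_of_tendsto_of_tendsto' hleft hright hbound).not_gt hL

end IsWeightedShiftSubSmul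

theorem stmt19_general (a : ℤ → ℂ)
    (aP aM : ℂ) (haP : aP ≠ 0)
    (hlimP : Tendsto a atTop (𝓝 aP)) (hlimM : Tendsto a atBot (𝓝 aM))
    (B : lp (fun _ : ℤ => ℂ) 2 →L[ℂ] lp (fun _ : ℤ => ℂ) 2)
    (hB : ∀ (u : lp (fun _ : ℤ => ℂ) 2) (k : ℤ), B u k = a k * u (k + 1))
    (lam : ℂ) (hlam1 : ‖lam‖ = ‖aP‖) (hlam2 : ‖aM‖ < ‖lam‖) :
    ¬ IsClosed (Set.range ⇑(B - lam • ContinuousLinearMap.id ℂ (lp (fun _ : ℤ => ℂ) 2))) := by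
  intro hclosed
  set T := B - lam • ContinuousLinearMap.id ℂ (lp (fun _ : ℤ => ℂ) 2)
  have hT : IsWeightedShiftSubSmul (T†) (fun k => conj (a k)) (conj lam) :=
    isWeightedShiftSubSmul_adjoint B hB lam
  have hlam : conj lam ≠ 0 := by
    rw [map_ne_zero, ← norm_ne_zero_iff, hlam1, norm_ne_zero_iff]
    exact haP
  have hsurj : Function.Surjective T :=
    T.surjective_of_isClosed_range_of_ker_adjoint_eq_bot hclosed
      (hT.ker_eq_bot (hlimM.star (R := ℂ)) (by simpa using hlam2))
  obtain ⟨K, hK⟩ := T.exists_antilipschitzWith_adjoint_of_surjective hsurj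
  exact hT.not_antilipschitzWith hlam (hlimP.star (R := ℂ)) (by simpa using hlam1.symm) K hK

/-- For a bounded sequence `a : ℤ → ℂ` with `a k ≠ 0` and limits `a(±∞)`, if
`|λ| = |a(+∞)| ≠ 0` and `|a(−∞)| < |λ|`, then the range of `aW − λI` on `ℓ²(ℤ)` is
not closed. -/
theorem stmt19 (a : ℤ → ℂ) (ha : ∀ k, a k ≠ 0)
    (aP aM : ℂ) (haP : aP ≠ 0) (haM : aM ≠ 0)
    (hlimP : Tendsto a atTop (𝓝 aP)) (hlimM : Tendsto a atBot (𝓝 aM))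
    (B : lp (fun _ : ℤ => ℂ) 2 →L[ℂ] lp (fun _ : ℤ => ℂ) 2)
    (hB : ∀ (u : lp (fun _ : ℤ => ℂ) 2) (k : ℤ), B u k = a k * u (k + 1))
    (lam : ℂ) (hlam1 : ‖lam‖ = ‖aP‖) (hlam2 : ‖aM‖ < ‖lam‖) :
    ¬ IsClosed (Set.range ⇑(B - lam • ContinuousLinearMap.id ℂ (lp (fun _ : ℤ => ℂ) 2))) :=
  stmt19_general a aP aM haP hlimP hlimM B hB lam hlam1 hlam2
end
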